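/- arXiv:1509.08276 — 6 statements merged into one kernel-verified Lean document; each statement's English description precedes it below -/
import Mathlib

section
/- Let n be an even integer with n ≥ 6. In the non-minority-answer model with queries of size q = 4, the family of all 4-element subsets of [n] does not determine a non-minority ball: there exists an answer function a on all 4-subsets, admitting at least one legal coloring, such that for every ball b∈[n] there is a coloring legal for a under which b is not a non-minority ball of [n]. -/
/-- `b` is a majority ball of `A` under coloring `c`:
strictly more than `|A|/2` balls of `A` have color `c b`. -/
def majBall {n : ℕ} (c : Fin n → Bool) (A : Finset (Fin n)) (b : Fin n) : Prop :=
  b ∈ A ∧ A.card < 2 * (A.filter fun x => c x = c b).card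

/-- `b` is a non-minority ball of `A` under coloring `c`:
at least `|A|/2` balls of `A` have color `c b`. -/
def nonMinBall {n : ℕ} (c : Fin n → Bool) (A : Finset (Fin n)) (b : Fin n) : Prop :=
  b ∈ A ∧ A.card ≤ 2 * (A.filter fun x => c x = c b).card

/-- A coloring `c` is legal for the answer function `a` on the query set `Q`. -/
def Legal {n : ℕ} (Q : Finset (Finset (Fin n))) (a : Finset (Fin n) → Fin n)
    (c : Fin n → Bool) : Prop :=
  ∀ T ∈ Q, majBall c T (a T)

/-- The query set `Q` determines a non-minority ball. -/
def Determines {n : ℕ} (Q : Finset (Finset (Fin n))) : Prop :=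
  ∀ a : Finset (Fin n) → Fin n, (∀ T ∈ Q, a T ∈ T) → (∃ c, Legal Q a c) →
    ∃ b : Fin n, ∀ c : Fin n → Bool, Legal Q a c → nonMinBall c Finset.univ b

/-- Co-degree: the number of queries of `Q` containing both `x` and `y`. -/
def codeg {n : ℕ} (Q : Finset (Finset (Fin n))) (x y : Fin n) : ℕ :=
  (Q.filter fun T => x ∈ T ∧ y ∈ T).card

/-- A coloring is legal for an answer function `a` on all `q`-element subsets in the
non-minority-answer model: every answer is a non-minority ball of its query. -/
def LegalNM {n : ℕ} (q : ℕ) (a : Finset (Fin n) → Fin n) (c : Fin n → Bool) : Prop :=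
  ∀ T : Finset (Fin n), T.card = q → nonMinBall c T (a T)

namespace Stmt12Aux

abbrev Prof := Bool × Bool × Bool × Bool × Bool

/-- The base coloring: the first `n/2` balls are `true` (red), the rest `false` (blue). -/
def base (n : ℕ) (x : Fin n) : Bool := decide (x.val < n / 2)

/-- The coloring obtained from `base` by flipping the colors of balls whose value is in `L`. -/
def flipv (n : ℕ) (L : List ℕ) (x : Fin n) : Bool :=
  if x.val ∈ L then !(base n x) else base n x

/-- The family of five colorings used in the construction. -/
def cols (n : ℕ) : List (Fin n → Bool) :=
  [flipv n [], flipv n [0], flipv n [n/2], flipv n [0, n/2+1, n/2+2], flipv n [n/2, 1, 2]]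

/-- The profile of a ball: its color under each of the five colorings. -/
def prof (n : ℕ) (x : Fin n) : Prof :=
  (flipv n [] x, flipv n [0] x, flipv n [n/2] x,
   flipv n [0, n/2+1, n/2+2] x, flipv n [n/2, 1, 2] x)

/-- The six possible profiles. -/
def A : List Prof :=
  [(true,true,true,true,true), (true,false,true,false,true), (true,true,true,true,false),
   (false,false,false,false,false), (false,false,true,false,true), (false,false,false,true,false)]

/-- `a` has, in each of the five coordinates, a companion among `b`, `c`, `d`. -/
def Cov (a b c d : Prof) : Prop :=
  (a.1 = b.1 ∨ a.1 = c.1 ∨ a.1 = d.1) ∧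
  (a.2.1 = b.2.1 ∨ a.2.1 = c.2.1 ∨ a.2.1 = d.2.1) ∧
  (a.2.2.1 = b.2.2.1 ∨ a.2.2.1 = c.2.2.1 ∨ a.2.2.1 = d.2.2.1) ∧
  (a.2.2.2.1 = b.2.2.2.1 ∨ a.2.2.2.1 = c.2.2.2.1 ∨ a.2.2.2.1 = d.2.2.2.1) ∧
  (a.2.2.2.2 = b.2.2.2.2 ∨ a.2.2.2.2 = c.2.2.2.2 ∨ a.2.2.2.2 = d.2.2.2.2)

instance (a b c d : Prof) : Decidable (Cov a b c d) := by unfold Cov; infer_instance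

lemma key : ∀ a ∈ A, ∀ b ∈ A, ∀ c ∈ A, ∀ d ∈ A,
    Cov a b c d ∨ Cov b a c d ∨ Cov c a b d ∨ Cov d a b c := by decide

lemma prof_mem {n : ℕ} (hn : 6 ≤ n) (x : Fin n) : prof n x ∈ A := by
  have hx := x.isLt
  simp only [prof, flipv, base, List.mem_cons, List.mem_singleton, List.not_mem_nil, or_false]
  by_cases e0 : x.val = 0 <;> by_cases e1 : x.val = 1 <;> by_cases e2 : x.val = 2 <;>
    by_cases eh : x.val = n/2 <;> by_cases eh1 : x.val = n/2+1 <;>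
    by_cases eh2 : x.val = n/2+2 <;> by_cases eb : x.val < n/2 <;>
    first
      | omega
      | (simp_all [A]; try omega)

/-- `y` is a good answer for the query `T`: under every coloring in the family,
at least two balls of `T` share `y`'s color. -/
def Good (n : ℕ) (T : Finset (Fin n)) (y : Fin n) : Prop :=
  ∀ c ∈ cols n, 2 ≤ (T.filter fun x => c x = c y).card

lemma two_le {n : ℕ} {T : Finset (Fin n)} {c : Fin n → Bool} {y z : Fin n}
    (hy : y ∈ T) (hz : z ∈ T) (hne : y ≠ z) (h : c z = c y) :
    2 ≤ (T.filter fun x => c x = c y).card :=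
  Finset.one_lt_card.2 ⟨y, Finset.mem_filter.2 ⟨hy, rfl⟩,
    z, Finset.mem_filter.2 ⟨hz, h⟩, hne⟩

lemma cov_good {n : ℕ} {T : Finset (Fin n)} {y p q r : Fin n}
    (hy : y ∈ T) (hp : p ∈ T) (hq : q ∈ T) (hr : r ∈ T)
    (hyp : y ≠ p) (hyq : y ≠ q) (hyr : y ≠ r)
    (hcov : Cov (prof n y) (prof n p) (prof n q) (prof n r)) : Good n T y := by
  simp only [Cov, prof] at hcov
  obtain ⟨h1, h2, h3, h4, h5⟩ := hcov
  intro c hc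
  simp only [cols, List.mem_cons, List.not_mem_nil, or_false] at hc
  rcases hc with rfl | rfl | rfl | rfl | rfl
  · rcases h1 with h | h | h
    exacts [two_le hy hp hyp h.symm, two_le hy hq hyq h.symm, two_le hy hr hyr h.symm]
  · rcases h2 with h | h | h
    exacts [two_le hy hp hyp h.symm, two_le hy hq hyq h.symm, two_le hy hr hyr h.symm]
  · rcases h3 with h | h | h
    exacts [two_le hy hp hyp h.symm, two_le hy hq hyq h.symm, two_le hy hr hyr h.symm]
  · rcases h4 with h | h | h
    exacts [two_le hy hp hyp h.symm, two_le hy hq hyq h.symm, two_le hy hr hyr h.symm]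
  · rcases h5 with h | h | h
    exacts [two_le hy hp hyp h.symm, two_le hy hq hyq h.symm, two_le hy hr hyr h.symm]

lemma exists_good {n : ℕ} (hn : 6 ≤ n) (T : Finset (Fin n)) (hT : T.card = 4) :
    ∃ y ∈ T, Good n T y := by
  rw [show (4:ℕ) = 3+1 from rfl, Finset.card_eq_succ] at hT
  obtain ⟨a, s, has, rfl, hs⟩ := hT
  obtain ⟨b, c, d, hbc, hbd, hcd, rfl⟩ := Finset.card_eq_three.1 hs
  have hab : a ≠ b := by rintro rfl; exact has (by simp)
  have hac : a ≠ c := by rintro rfl; exact has (by simp)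
  have had : a ≠ d := by rintro rfl; exact has (by simp)
  have ma : a ∈ insert a ({b, c, d} : Finset (Fin n)) := by simp
  have mb : b ∈ insert a ({b, c, d} : Finset (Fin n)) := by simp
  have mc : c ∈ insert a ({b, c, d} : Finset (Fin n)) := by simp
  have md : d ∈ insert a ({b, c, d} : Finset (Fin n)) := by simp
  rcases key _ (prof_mem hn a) _ (prof_mem hn b) _ (prof_mem hn c) _ (prof_mem hn d)
    with H | H | H | H
  · exact ⟨a, ma, cov_good ma mb mc md hab hac had H⟩
  · exact ⟨b, mb, cov_good mb ma mc md hab.symm hbc hbd H⟩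
  · exact ⟨c, mc, cov_good mc ma mb md hac.symm hbc.symm hcd H⟩
  · exact ⟨d, md, cov_good md ma mb mc had.symm hbd.symm hcd.symm H⟩

lemma count_le {n : ℕ} (c : Fin n → Bool) (t : Bool) (S : Finset ℕ)
    (hS : ∀ x : Fin n, c x = t → x.val ∈ S) :
    (Finset.univ.filter fun x => c x = t).card ≤ S.card :=
  Finset.card_le_card_of_injOn Fin.val
    (fun x hx => hS x (Finset.mem_filter.1 hx).2) Fin.val_injective.injOn

end Stmt12Aux

open Stmt12Aux in
theorem stmt_12 (n : ℕ) (heven : Even n) (hn : 6 ≤ n) :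
    ∃ a : Finset (Fin n) → Fin n,
      (∀ T : Finset (Fin n), T.card = 4 → a T ∈ T) ∧
      (∃ c : Fin n → Bool, LegalNM 4 a c) ∧
      ∀ b : Fin n, ∃ c : Fin n → Bool, LegalNM 4 a c ∧ ¬ nonMinBall c Finset.univ b := by
  classical
  obtain ⟨k, hk⟩ := heven
  have npos : 0 < n := by omega
  refine ⟨fun T => if hT : ∃ y ∈ T, Good n T y then hT.choose else ⟨0, npos⟩, ?_, ?_, ?_⟩
  · intro T hT
    have hg := exists_good hn T hT
    simp only [dif_pos hg]
    exact hg.choose_spec.1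
  · refine ⟨flipv n [], ?_⟩
    intro T hT
    have hg := exists_good hn T hT
    simp only [dif_pos hg]
    refine ⟨hg.choose_spec.1, ?_⟩
    have := hg.choose_spec.2 (flipv n []) (by simp [cols])
    omega
  · have legal : ∀ c ∈ cols n,
        LegalNM 4 (fun T => if hT : ∃ y ∈ T, Good n T y then hT.choose else ⟨0, npos⟩) c := by
      intro c hc T hT
      have hg := exists_good hn T hT
      simp only [dif_pos hg]
      refine ⟨hg.choose_spec.1, ?_⟩
      have := hg.choose_spec.2 c hc
      omega
    intro b
    by_cases hb : b.val < n / 2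
    · by_cases hb0 : b.val = 0
      · -- red b = 0 : use flipv n [n/2, 1, 2]
        refine ⟨flipv n [n/2, 1, 2], legal _ (by simp [cols]), ?_⟩
        have hcb : flipv n [n/2, 1, 2] b = true := by
          simp only [flipv, base, List.mem_cons, List.mem_singleton, List.not_mem_nil, or_false]
          rw [if_neg (by omega)]
          simp only [decide_eq_true_eq]
          omega
        rintro ⟨-, hle⟩
        rw [Finset.card_univ, Fintype.card_fin] at hle
        simp only [hcb] at hle
        have hbound := count_le (flipv n [n/2, 1, 2]) true
            (insert (n/2) (((Finset.range (n/2)).erase 1).erase 2)) ?_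
        · have hc2 : (((Finset.range (n/2)).erase 1).erase 2).card = n/2 - 2 := by
            rw [Finset.card_erase_of_mem (by simp; omega),
                Finset.card_erase_of_mem (by simp; omega), Finset.card_range]
            omega
          have := Finset.card_insert_le (n/2) (((Finset.range (n/2)).erase 1).erase 2)
          omega
        · intro x hx
          have hxlt := x.isLt
          simp only [flipv, base, List.mem_cons, List.mem_singleton, List.not_mem_nil,
            or_false] at hx
          simp only [Finset.mem_insert, Finset.mem_erase, Finset.mem_range]
          split at hx <;>
            simp only [Bool.not_eq_true', decide_eq_true_eq, decide_eq_false_iff_not] at hx <;>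
            omega
      · -- red b ≠ 0 : use flipv n [0]
        refine ⟨flipv n [0], legal _ (by simp [cols]), ?_⟩
        have hcb : flipv n [0] b = true := by
          simp only [flipv, base, List.mem_singleton]
          rw [if_neg (by omega)]
          simp only [decide_eq_true_eq]
          omega
        rintro ⟨-, hle⟩
        rw [Finset.card_univ, Fintype.card_fin] at hle
        simp only [hcb] at hle
        have hbound := count_le (flipv n [0]) true ((Finset.range (n/2)).erase 0) ?_
        · have hc2 : ((Finset.range (n/2)).erase 0).card = n/2 - 1 := by
            rw [Finset.card_erase_of_mem (by simp; omega), Finset.card_range]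
          omega
        · intro x hx
          have hxlt := x.isLt
          simp only [flipv, base, List.mem_singleton] at hx
          simp only [Finset.mem_erase, Finset.mem_range]
          split at hx <;>
            simp only [Bool.not_eq_true', decide_eq_true_eq, decide_eq_false_iff_not] at hx <;>
            omega
    · by_cases hbh : b.val = n / 2
      · -- blue b = n/2 : use flipv n [0, n/2+1, n/2+2]
        refine ⟨flipv n [0, n/2+1, n/2+2], legal _ (by simp [cols]), ?_⟩
        have hcb : flipv n [0, n/2+1, n/2+2] b = false := by
          simp only [flipv, base, List.mem_cons, List.mem_singleton, List.not_mem_nil, or_false]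
          rw [if_neg (by omega)]
          simp only [decide_eq_false_iff_not]
          omega
        rintro ⟨-, hle⟩
        rw [Finset.card_univ, Fintype.card_fin] at hle
        simp only [hcb] at hle
        have hbound := count_le (flipv n [0, n/2+1, n/2+2]) false
            (insert 0 (((Finset.Ico (n/2) n).erase (n/2+1)).erase (n/2+2))) ?_
        · have hc2 : (((Finset.Ico (n/2) n).erase (n/2+1)).erase (n/2+2)).card
              = n - n/2 - 2 := by
            rw [Finset.card_erase_of_mem (by simp; omega),
                Finset.card_erase_of_mem (by simp; omega), Nat.card_Ico]
            omega
          have := Finset.card_insert_le 0 (((Finset.Ico (n/2) n).erase (n/2+1)).erase (n/2+2))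
          omega
        · intro x hx
          have hxlt := x.isLt
          simp only [flipv, base, List.mem_cons, List.mem_singleton, List.not_mem_nil,
            or_false] at hx
          simp only [Finset.mem_insert, Finset.mem_erase, Finset.mem_Ico]
          split at hx <;>
            simp only [Bool.not_eq_false', decide_eq_true_eq, decide_eq_false_iff_not] at hx <;>
            omega
      · -- blue b ≠ n/2 : use flipv n [n/2]
        refine ⟨flipv n [n/2], legal _ (by simp [cols]), ?_⟩
        have hcb : flipv n [n/2] b = false := by
          simp only [flipv, base, List.mem_singleton]
          rw [if_neg (by omega)]
          simp only [decide_eq_false_iff_not]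
          omega
        rintro ⟨-, hle⟩
        rw [Finset.card_univ, Fintype.card_fin] at hle
        simp only [hcb] at hle
        have hbound := count_le (flipv n [n/2]) false (Finset.Ico (n/2+1) n) ?_
        · rw [Nat.card_Ico] at hbound
          omega
        · intro x hx
          have hxlt := x.isLt
          simp only [flipv, base, List.mem_singleton] at hx
          simp only [Finset.mem_Ico]
          split at hx <;>
            simp only [Bool.not_eq_false', decide_eq_true_eq, decide_eq_false_iff_not] at hx <;>
            omega
end

section
/- Let q be an even integer with 2 ≤ q and let n be an odd integer with q < n. In the non-minority-answer model with queries of size q, the family of all q-element subsets of [n] does not determine a non-minority ball: there exists an answer function a on all q-subsets, admitting at least one legal coloring, such that for every ball b∈[n] there is a coloring legal for a under which b is not a non-minority ball of [n]. -/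
private lemma card_filter_col {n : ℕ} (T : Finset (Fin n)) (p : Fin n → Prop) [DecidablePred p]
    (t : Fin n) :
    (T.filter fun x => (decide (p x) : Bool) = decide (p t)).card
      = if p t then (T.filter p).card else T.card - (T.filter p).card := by
  split_ifs with h
  · rw [Finset.filter_congr (q := p) (fun x _ => by simp [decide_eq_decide, h])]
  · rw [Finset.filter_congr (q := fun x => ¬ p x) (fun x _ => by simp [decide_eq_decide, h])]
    have := Finset.card_filter_add_card_filter_not (s := T) (p := p)
    omega

private lemma nonMin_of_count {n : ℕ} (p : Fin n → Prop) [DecidablePred p]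
    (T : Finset (Fin n)) (t : Fin n) (ht : t ∈ T)
    (h : T.card ≤ 2 * (if p t then (T.filter p).card else T.card - (T.filter p).card)) :
    nonMinBall (fun x => decide (p x)) T t := by
  refine ⟨ht, ?_⟩
  rw [card_filter_col T p t]
  exact h

private lemma filter_split {α : Type*} (T : Finset α) (p q : α → Prop)
    [DecidablePred p] [DecidablePred q] :
    (T.filter p).card = (T.filter fun x => p x ∧ q x).card
      + (T.filter fun x => p x ∧ ¬ q x).card := by
  rw [← Finset.filter_filter, ← Finset.filter_filter]
  exact (Finset.card_filter_add_card_filter_not (s := T.filter p) (p := q)).symm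

private lemma key {n m q k : ℕ} (hn : n = 2*m+1) (hq : q = 2*k) (hk1 : 1 ≤ k) (_hkm : k ≤ m)
    (T : Finset (Fin n)) (hT : T.card = q) :
    ∃ t, t ∈ T ∧ (nonMinBall (fun x : Fin n => decide (x.val < m)) T t
      ∧ nonMinBall (fun x : Fin n => decide (m ≤ x.val ∧ x.val < 2*m)) T t
      ∧ nonMinBall (fun x : Fin n => decide (x.val = 2*m ∨ x.val + 1 < m)) T t) := by
  have F1 : (T.filter fun x : Fin n => x.val < m).card
      + ((T.filter fun x : Fin n => m ≤ x.val ∧ x.val < 2*m).card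
        + (T.filter fun x : Fin n => x.val = 2*m).card) = q := by
    have h1 := Finset.card_filter_add_card_filter_not (s := T)
      (p := fun x : Fin n => x.val < m)
    have h2 := filter_split (T := T) (p := fun x : Fin n => ¬ x.val < m)
      (q := fun x : Fin n => x.val < 2*m)
    rw [Finset.filter_congr (p := fun x : Fin n => ¬ x.val < m ∧ x.val < 2*m)
          (q := fun x : Fin n => m ≤ x.val ∧ x.val < 2*m) (fun x _ => by omega),
        Finset.filter_congr (p := fun x : Fin n => ¬ x.val < m ∧ ¬ x.val < 2*m)
          (q := fun x : Fin n => x.val = 2*m)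
          (fun x _ => by have := x.isLt; omega)] at h2
    omega
  have F2 : (T.filter fun x : Fin n => x.val < m).card
      = (T.filter fun x : Fin n => x.val + 1 < m).card
        + (T.filter fun x : Fin n => x.val < m ∧ ¬ x.val + 1 < m).card := by
    have h2 := filter_split (T := T) (p := fun x : Fin n => x.val < m)
      (q := fun x : Fin n => x.val + 1 < m)
    rw [Finset.filter_congr (p := fun x : Fin n => x.val < m ∧ x.val + 1 < m)
          (q := fun x : Fin n => x.val + 1 < m) (fun x _ => by omega)] at h2
    exact h2
  have F3 : (T.filter fun x : Fin n => x.val = 2*m).card ≤ 1 := by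
    refine Finset.card_le_one.mpr (fun x hx y hy => ?_)
    simp only [Finset.mem_filter] at hx hy
    exact Fin.ext (by omega)
  have Fc2 : (T.filter fun x : Fin n => x.val < m ∧ ¬ x.val + 1 < m).card ≤ 1 := by
    refine Finset.card_le_one.mpr (fun x hx y hy => ?_)
    simp only [Finset.mem_filter] at hx hy
    exact Fin.ext (by omega)
  have F4 : (T.filter fun x : Fin n => x.val = 2*m ∨ x.val + 1 < m).card
      = (T.filter fun x : Fin n => x.val = 2*m).card
        + (T.filter fun x : Fin n => x.val + 1 < m).card := by
    have h2 := filter_split (T := T) (p := fun x : Fin n => x.val = 2*m ∨ x.val + 1 < m)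
      (q := fun x : Fin n => x.val = 2*m)
    rw [Finset.filter_congr (p := fun x : Fin n => (x.val = 2*m ∨ x.val + 1 < m) ∧ x.val = 2*m)
          (q := fun x : Fin n => x.val = 2*m) (fun x _ => by omega),
        Finset.filter_congr (p := fun x : Fin n => (x.val = 2*m ∨ x.val + 1 < m) ∧ ¬ x.val = 2*m)
          (q := fun x : Fin n => x.val + 1 < m) (fun x _ => by omega)] at h2
    exact h2
  rcases lt_trichotomy ((T.filter fun x : Fin n => x.val < m).card) k with hak | hak | hak
  · obtain ⟨t, ht⟩ := Finset.card_pos.mp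
      (show 0 < (T.filter fun x : Fin n => m ≤ x.val ∧ x.val < 2*m).card by omega)
    have htm := Finset.mem_filter.mp ht
    refine ⟨t, htm.1, ?_, ?_, ?_⟩
    · apply nonMin_of_count _ T t htm.1
      rw [if_neg (by omega)]; omega
    · apply nonMin_of_count _ T t htm.1
      rw [if_pos htm.2]; omega
    · apply nonMin_of_count _ T t htm.1
      rw [if_neg (by omega)]; omega
  · by_cases he : (T.filter fun x : Fin n => x.val = 2*m).card = 0
    · by_cases hc2 : (T.filter fun x : Fin n => x.val < m ∧ ¬ x.val + 1 < m).card = 0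
      · obtain ⟨t, ht⟩ := Finset.card_pos.mp (show 0 < T.card by omega)
        refine ⟨t, ht, ?_, ?_, ?_⟩ <;>
          (apply nonMin_of_count _ T t ht; split_ifs <;> omega)
      · obtain ⟨t, ht⟩ := Finset.card_pos.mp
          (show 0 < (T.filter fun x : Fin n => m ≤ x.val ∧ x.val < 2*m).card by omega)
        have htm := Finset.mem_filter.mp ht
        refine ⟨t, htm.1, ?_, ?_, ?_⟩
        · apply nonMin_of_count _ T t htm.1
          rw [if_neg (by omega)]; omega
        · apply nonMin_of_count _ T t htm.1
          rw [if_pos htm.2]; omega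
        · apply nonMin_of_count _ T t htm.1
          rw [if_neg (by omega)]; omega
    · obtain ⟨t, ht⟩ := Finset.card_pos.mp
        (show 0 < (T.filter fun x : Fin n => x.val = 2*m).card by omega)
      have htm := Finset.mem_filter.mp ht
      refine ⟨t, htm.1, ?_, ?_, ?_⟩
      · apply nonMin_of_count _ T t htm.1
        rw [if_neg (by have := htm.2; omega)]; omega
      · apply nonMin_of_count _ T t htm.1
        rw [if_neg (by have := htm.2; omega)]; omega
      · apply nonMin_of_count _ T t htm.1
        rw [if_pos (Or.inl htm.2)]; omega
  · obtain ⟨t, ht⟩ := Finset.card_pos.mp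
      (show 0 < (T.filter fun x : Fin n => x.val + 1 < m).card by omega)
    have htm := Finset.mem_filter.mp ht
    refine ⟨t, htm.1, ?_, ?_, ?_⟩
    · apply nonMin_of_count _ T t htm.1
      rw [if_pos (by have := htm.2; omega)]; omega
    · apply nonMin_of_count _ T t htm.1
      rw [if_neg (by have := htm.2; omega)]; omega
    · apply nonMin_of_count _ T t htm.1
      rw [if_pos (Or.inr htm.2)]; omega

private lemma card_univ_p1 {n m : ℕ} (hn : n = 2*m+1) :
    (Finset.univ.filter fun x : Fin n => x.val < m).card = m := by
  have : (Finset.univ.filter fun x : Fin n => x.val < m)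
      = (Finset.range m).attachFin (fun i hi => by simp only [Finset.mem_range] at hi; omega) := by
    ext x
    simp [Finset.mem_attachFin]
  rw [this, Finset.card_attachFin, Finset.card_range]

private lemma card_univ_p2 {n m : ℕ} (hn : n = 2*m+1) :
    (Finset.univ.filter fun x : Fin n => m ≤ x.val ∧ x.val < 2*m).card = m := by
  have : (Finset.univ.filter fun x : Fin n => m ≤ x.val ∧ x.val < 2*m)
      = (Finset.Ico m (2*m)).attachFin
          (fun i hi => by simp only [Finset.mem_Ico] at hi; omega) := by
    ext x
    simp [Finset.mem_attachFin]
  rw [this, Finset.card_attachFin, Nat.card_Ico]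
  omega

private lemma card_univ_p3 {n m : ℕ} (hn : n = 2*m+1) (hm : 1 ≤ m) :
    (Finset.univ.filter fun x : Fin n => x.val = 2*m ∨ x.val + 1 < m).card = m := by
  have : (Finset.univ.filter fun x : Fin n => x.val = 2*m ∨ x.val + 1 < m)
      = (insert (2*m) (Finset.range (m-1))).attachFin
          (fun i hi => by
            simp only [Finset.mem_insert, Finset.mem_range] at hi
            omega) := by
    ext x
    simp only [Finset.mem_attachFin, Finset.mem_filter, Finset.mem_univ, true_and,
      Finset.mem_insert, Finset.mem_range]
    omega
  rw [this, Finset.card_attachFin, Finset.card_insert_of_notMem (by simp; omega),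
    Finset.card_range]
  omega

open Classical in
private noncomputable def ans (n m : ℕ) (hn : 0 < n) (T : Finset (Fin n)) : Fin n :=
  if h : ∃ t, t ∈ T ∧ (nonMinBall (fun x : Fin n => decide (x.val < m)) T t
      ∧ nonMinBall (fun x : Fin n => decide (m ≤ x.val ∧ x.val < 2*m)) T t
      ∧ nonMinBall (fun x : Fin n => decide (x.val = 2*m ∨ x.val + 1 < m)) T t)
  then h.choose else ⟨0, hn⟩

private lemma ans_spec {n m : ℕ} (hn : 0 < n) (T : Finset (Fin n))
    (h : ∃ t, t ∈ T ∧ (nonMinBall (fun x : Fin n => decide (x.val < m)) T t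
      ∧ nonMinBall (fun x : Fin n => decide (m ≤ x.val ∧ x.val < 2*m)) T t
      ∧ nonMinBall (fun x : Fin n => decide (x.val = 2*m ∨ x.val + 1 < m)) T t)) :
    ans n m hn T ∈ T
      ∧ (nonMinBall (fun x : Fin n => decide (x.val < m)) T (ans n m hn T)
      ∧ nonMinBall (fun x : Fin n => decide (m ≤ x.val ∧ x.val < 2*m)) T (ans n m hn T)
      ∧ nonMinBall (fun x : Fin n => decide (x.val = 2*m ∨ x.val + 1 < m)) T (ans n m hn T)) := by
  unfold ans
  rw [dif_pos h]
  exact ⟨h.choose_spec.1, h.choose_spec.2⟩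

theorem stmt_13 (q n : ℕ) (hq : Even q) (hq2 : 2 ≤ q) (hodd : Odd n) (hqn : q < n) :
    ∃ a : Finset (Fin n) → Fin n,
      (∀ T : Finset (Fin n), T.card = q → a T ∈ T) ∧
      (∃ c : Fin n → Bool, LegalNM q a c) ∧
      ∀ b : Fin n, ∃ c : Fin n → Bool, LegalNM q a c ∧ ¬ nonMinBall c Finset.univ b := by
  obtain ⟨m, hm⟩ := hodd
  obtain ⟨k, hk⟩ := hq
  have hq2k : q = 2*k := by omega
  have hk1 : 1 ≤ k := by omega
  have hkm : k ≤ m := by omega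
  have hn0 : 0 < n := by omega
  refine ⟨ans n m hn0, ?_, ?_, ?_⟩
  · intro T hT
    exact (ans_spec hn0 T (key hm hq2k hk1 hkm T hT)).1
  · exact ⟨fun x : Fin n => decide (x.val < m),
      fun T hT => (ans_spec hn0 T (key hm hq2k hk1 hkm T hT)).2.1⟩
  · intro b
    by_cases hb1 : b.val < m
    · refine ⟨fun x : Fin n => decide (x.val < m),
        fun T hT => (ans_spec hn0 T (key hm hq2k hk1 hkm T hT)).2.1, ?_⟩
      rintro ⟨-, hle⟩
      rw [card_filter_col (Finset.univ) (fun x : Fin n => x.val < m) b, if_pos hb1,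
        card_univ_p1 hm, Finset.card_univ, Fintype.card_fin] at hle
      omega
    · by_cases hb2 : b.val < 2*m
      · refine ⟨fun x : Fin n => decide (m ≤ x.val ∧ x.val < 2*m),
          fun T hT => (ans_spec hn0 T (key hm hq2k hk1 hkm T hT)).2.2.1, ?_⟩
        rintro ⟨-, hle⟩
        rw [card_filter_col (Finset.univ) (fun x : Fin n => m ≤ x.val ∧ x.val < 2*m) b,
          if_pos ⟨by omega, hb2⟩, card_univ_p2 hm, Finset.card_univ, Fintype.card_fin] at hle
        omega
      · refine ⟨fun x : Fin n => decide (x.val = 2*m ∨ x.val + 1 < m),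
          fun T hT => (ans_spec hn0 T (key hm hq2k hk1 hkm T hT)).2.2.2, ?_⟩
        rintro ⟨-, hle⟩
        have hb3 : b.val = 2*m := by have := b.isLt; omega
        rw [card_filter_col (Finset.univ) (fun x : Fin n => x.val = 2*m ∨ x.val + 1 < m) b,
          if_pos (Or.inl hb3), card_univ_p3 hm (by omega), Finset.card_univ,
          Fintype.card_fin] at hle
        omega
end

section
/- Let 0 < α ≤ 1/2, let q ≥ 2 and n ≥ q be integers, and let A be the largest positive integer with ⌈q/A⌉ − 1 ≥ α(q−1); assume A ≥ 2 (equivalently ⌈q/2⌉ − 1 ≥ α(q−1), which guarantees that every q-subset has an α-ball under every coloring). If A divides n, or A divides q, or (n mod A) < (q mod A), then the family of all q-element subsets of [n] with α-ball answers does not determine a (1/A)-ball: there exists an answer function a on all q-subsets, admitting at least one legal coloring, such that for every ball b∈[n] there is a coloring legal for a under which b is not a (1/A)-ball of [n]. -/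
/-- `b` is a `β`-ball of `A` under coloring `c`: at least `β * (|A| - 1)` balls of `A`
other than `b` have color `c b`. -/
def betaBall {n : ℕ} (β : ℝ) (c : Fin n → Bool) (A : Finset (Fin n)) (b : Fin n) : Prop :=
  b ∈ A ∧ β * ((A.card : ℝ) - 1) ≤ (((A.erase b).filter fun x => c x = c b).card : ℝ)

/-- A coloring is legal for an answer function `a` on all `q`-element subsets in the
`α`-ball model: every answer is an `α`-ball of its query. -/
def LegalAlpha {n : ℕ} (α : ℝ) (q : ℕ) (a : Finset (Fin n) → Fin n) (c : Fin n → Bool) : Prop :=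
  ∀ T : Finset (Fin n), T.card = q → betaBall α c T (a T)

/-!
Sort the balls into their residue classes mod `A`, except that when `n ≡ 1 (mod A)` the
ball `0` forms a class of its own; then every class has fewer than `(n - 1) / A + 1` balls.
Answer a query `T` by a ball of a most popular class among the `A` residue classes. Coloring
one class red and all other balls blue is then legal. A red answer has at least `⌈q / A⌉`
balls of its class in `T` by pigeonhole over the at least `q - 1` balls of `T` outside the
split-off class; when that class exists, `n ≡ 1` and the divisibility hypothesis forbid
`q ≡ 1 (mod A)`, which is exactly what lifts the bound from `⌈(q - 1) / A⌉` to `⌈q / A⌉`.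
A blue answer lies in a class at least as large as the red part of `T`, so at least
`⌈q / 2⌉ ≥ ⌈q / A⌉` balls of `T` are blue. Under the coloring that makes the class of `b`
red, `b` has fewer than `(n - 1) / A` balls of its own color.
-/

open Finset

lemma betaBall_of_subset {n : ℕ} {β : ℝ} {c : Fin n → Bool} {T S : Finset (Fin n)}
    {b : Fin n}
    (hbS : b ∈ S) (hST : S ⊆ T) (hS : ∀ x ∈ S, c x = c b)
    (h : β * ((#T : ℝ) - 1) ≤ (#S : ℝ) - 1) : betaBall β c T b := by
  have hsub : S.erase b ⊆ (T.erase b).filter fun x => c x = c b := fun x hx => by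
    obtain ⟨hxb, hxS⟩ := mem_erase.1 hx
    exact mem_filter.2 ⟨mem_erase.2 ⟨hxb, hST hxS⟩, hS x hxS⟩
  have hS1 : 1 ≤ #S := card_pos.2 ⟨b, hbS⟩
  refine ⟨hST hbS, h.trans ?_⟩
  calc (#S : ℝ) - 1 = ((#(S.erase b) : ℕ) : ℝ) := by
        rw [card_erase_of_mem hbS, Nat.cast_sub hS1, Nat.cast_one]
    _ ≤ _ := by exact_mod_cast card_le_card hsub

lemma le_sub_one_of_le_mul {α : ℝ} {q A m : ℕ} (hA : 0 < A)
    (hceil : α * ((q : ℝ) - 1) ≤ (⌈(q : ℝ) / (A : ℝ)⌉ : ℝ) - 1) (hm : q ≤ A * m) :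
    α * ((q : ℝ) - 1) ≤ (m : ℝ) - 1 := by
  have hle : ⌈(q : ℝ) / A⌉ ≤ m := Int.ceil_le.2 <| by
    rw [div_le_iff₀ (by positivity)]
    exact_mod_cast (by linarith : q ≤ m * A)
  have : (⌈(q : ℝ) / A⌉ : ℝ) ≤ m := by exact_mod_cast hle
  linarith

lemma card_filter_mod_eq_le {n A i c : ℕ} (h : n ≤ A * c + i) :
    #{b : Fin n | b.val % A = i} ≤ c := by
  simpa using card_le_card_of_injOn (t := range c) (fun b : Fin n => b.val / A)
    (fun b hb => by
      have hb := (mem_filter.1 hb).2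
      have := Nat.div_add_mod b.val A
      have := b.isLt
      simp only [coe_range, Set.mem_Iio]
      by_contra! hc
      nlinarith)
    (fun b₁ hb₁ b₂ hb₂ hdiv => Fin.ext <| by
      rw [← Nat.div_add_mod b₁.val A, ← Nat.div_add_mod b₂.val A, (mem_filter.1 hb₁).2,
        (mem_filter.1 hb₂).2]
      exact congrArg (A * · + i) hdiv)

section PuncturedResidues

variable {n A : ℕ}

-- Label `A` is the class of ball `0` split off when `n ≡ 1 (mod A)`.
def classOf (n A : ℕ) (b : Fin n) : ℕ := if n % A = 1 ∧ b.val = 0 then A else b.val % A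

def classCount (A : ℕ) (T : Finset (Fin n)) (j : ℕ) : ℕ := #{b ∈ T | classOf n A b = j}

def classColoring (A j : ℕ) (b : Fin n) : Bool := decide (classOf n A b = j)

def IsMajorityAnswer (A : ℕ) (T : Finset (Fin n)) (b : Fin n) : Prop :=
  b ∈ T ∧ classOf n A b < A ∧ ∀ j < A, classCount A T j ≤ classCount A T (classOf n A b)

lemma classOf_le (hA : 0 < A) (b : Fin n) : classOf n A b ≤ A := by
  unfold classOf
  split_ifs
  exacts [le_rfl, (Nat.mod_lt _ hA).le]

lemma classOf_eq_mod {b : Fin n} (hb : classOf n A b < A) : classOf n A b = b.val % A := by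
  unfold classOf at hb ⊢
  split_ifs at hb ⊢
  · exact absurd hb (lt_irrefl A)
  · rfl

lemma eq_zero_of_le_classOf (hA : 0 < A) {b : Fin n} (hb : A ≤ classOf n A b) :
    n % A = 1 ∧ b.val = 0 := by
  unfold classOf at hb
  split_ifs at hb with h
  · exact h
  · exact absurd hb (not_le.2 (Nat.mod_lt _ hA))

lemma classCount_le_one (hA : 0 < A) (T : Finset (Fin n)) {j : ℕ} (hj : A ≤ j) :
    classCount A T j ≤ 1 :=
  card_le_one.2 fun x hx y hy => by
    have hx := (eq_zero_of_le_classOf hA (hj.trans_eq (mem_filter.1 hx).2.symm)).2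
    have hy := (eq_zero_of_le_classOf hA (hj.trans_eq (mem_filter.1 hy).2.symm)).2
    exact Fin.ext (hx.trans hy.symm)

lemma sum_classCount (hA : 0 < A) (T : Finset (Fin n)) :
    ∑ j ∈ range A, classCount A T j + classCount A T A = #T := by
  rw [← sum_range_succ, card_eq_sum_card_fiberwise (f := classOf n A) (t := range (A + 1))]
  · rfl
  · exact fun b _ => mem_range.2 (Nat.lt_succ_of_le (classOf_le hA b))

lemma exists_isMajorityAnswer (hA : 0 < A) {T : Finset (Fin n)} (hT : 2 ≤ #T) :
    ∃ b, IsMajorityAnswer A T b := by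
  obtain ⟨j₀, hj₀, hmax⟩ :=
    exists_max_image (range A) (classCount A T) (nonempty_range_iff.2 hA.ne')
  have hsum : ∑ j ∈ range A, classCount A T j ≤ A * classCount A T j₀ := by
    simpa using sum_le_card_nsmul (range A) _ _ hmax
  have := sum_classCount hA T
  have := classCount_le_one hA T le_rfl
  have hpos : 0 < classCount A T j₀ :=
    Nat.pos_of_ne_zero fun h => by rw [h, mul_zero] at hsum; omega
  obtain ⟨b, hb⟩ := card_pos.1 hpos
  obtain ⟨hbT, hbj⟩ := mem_filter.1 hb
  exact ⟨b, hbT, hbj ▸ mem_range.1 hj₀, fun j hj => hbj ▸ hmax j (mem_range.2 hj)⟩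

namespace IsMajorityAnswer

variable {T : Finset (Fin n)} {b : Fin n}

lemma classCount_le (h : IsMajorityAnswer A T b) (hA : 0 < A) (j : ℕ) :
    classCount A T j ≤ classCount A T (classOf n A b) := by
  by_cases hj : j < A
  · exact h.2.2 j hj
  · exact (classCount_le_one hA T (not_lt.1 hj)).trans
      (card_pos.2 ⟨b, mem_filter.2 ⟨h.1, rfl⟩⟩)

lemma card_le_mul_classCount (h : IsMajorityAnswer A T b) (hA : 2 ≤ A)
    (hnT : n % A = 1 → #T % A ≠ 1) : #T ≤ A * classCount A T (classOf n A b) := by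
  have hsum : ∑ j ∈ range A, classCount A T j ≤ A * classCount A T (classOf n A b) := by
    simpa using sum_le_card_nsmul (range A) _ _ fun j hj => h.2.2 j (mem_range.1 hj)
  have := sum_classCount (by omega : 0 < A) T
  by_cases h0 : classCount A T A = 0
  · omega
  obtain ⟨x, hx⟩ := card_pos.1 (Nat.pos_of_ne_zero h0)
  have hT := hnT (eq_zero_of_le_classOf (by omega) (mem_filter.1 hx).2.ge).1
  have := classCount_le_one (by omega : 0 < A) T le_rfl
  by_contra! hlt
  rw [show #T = A * classCount A T (classOf n A b) + 1 by omega, Nat.mul_add_mod,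
    Nat.mod_eq_of_lt hA] at hT
  exact hT rfl

variable {α : ℝ}

lemma betaBall_classColoring_self (h : IsMajorityAnswer A T b) (hA : 2 ≤ A)
    (hceil : α * ((#T : ℝ) - 1) ≤ (⌈(#T : ℝ) / (A : ℝ)⌉ : ℝ) - 1)
    (hnT : n % A = 1 → #T % A ≠ 1) : betaBall α (classColoring A (classOf n A b)) T b :=
  betaBall_of_subset (S := {x ∈ T | classOf n A x = classOf n A b})
    (mem_filter.2 ⟨h.1, rfl⟩) (filter_subset _ _)
    (fun x hx => by simp [classColoring, (mem_filter.1 hx).2])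
    (le_sub_one_of_le_mul (by omega) hceil (h.card_le_mul_classCount hA hnT))

lemma betaBall_classColoring_of_ne (h : IsMajorityAnswer A T b) (hA : 2 ≤ A)
    (hceil : α * ((#T : ℝ) - 1) ≤ (⌈(#T : ℝ) / (A : ℝ)⌉ : ℝ) - 1) {j : ℕ}
    (hj : classOf n A b ≠ j) : betaBall α (classColoring A j) T b := by
  set S := {x ∈ T | classOf n A x ≠ j}
  have hsplit : classCount A T j + #S = #T := card_filter_add_card_filter_not _
  have hmaj : classCount A T (classOf n A b) ≤ #S :=
    card_le_card (monotone_filter_right T fun x _ hx => hx ▸ hj)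
  have := h.classCount_le (by omega) j
  have hhalf : #T ≤ 2 * #S := by omega
  exact betaBall_of_subset (S := S) (mem_filter.2 ⟨h.1, hj⟩) (filter_subset _ _)
    (fun x hx => by simp [classColoring, (mem_filter.1 hx).2, hj])
    (le_sub_one_of_le_mul (by omega) hceil (hhalf.trans (Nat.mul_le_mul_right _ hA)))

end IsMajorityAnswer

lemma legalAlpha_classColoring {α : ℝ} {q : ℕ} {a : Finset (Fin n) → Fin n} (hA : 2 ≤ A)
    (hceil : α * ((q : ℝ) - 1) ≤ (⌈(q : ℝ) / (A : ℝ)⌉ : ℝ) - 1)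
    (hnq : n % A = 1 → q % A ≠ 1)
    (ha : ∀ T : Finset (Fin n), #T = q → IsMajorityAnswer A T (a T)) (j : ℕ) :
    LegalAlpha α q a (classColoring A j) := by
  intro T hT
  subst hT
  by_cases hj : classOf n A (a T) = j
  · exact hj ▸ (ha T rfl).betaBall_classColoring_self hA hceil hnq
  · exact (ha T rfl).betaBall_classColoring_of_ne hA hceil hj

lemma card_classOf_le_card_mod {j : ℕ} (hj : j < A) :
    #{b : Fin n | classOf n A b = j} ≤ #{b : Fin n | b.val % A = j} :=
  card_le_card <| monotone_filter_right _ fun _ _ hb =>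
    (classOf_eq_mod (hb.trans_lt hj)).symm.trans hb

lemma card_classOf_zero_lt_card_mod (hA : 0 < A) (hn : 0 < n) (hnA : n % A = 1) :
    #{b : Fin n | classOf n A b = 0} < #{b : Fin n | b.val % A = 0} := by
  refine card_lt_card ((ssubset_iff_of_subset ?_).2
    ⟨⟨0, hn⟩, by simp, by simp [classOf, hnA, hA.ne']⟩)
  exact monotone_filter_right _ fun _ _ hb => (classOf_eq_mod (hb.trans_lt hA)).symm.trans hb

lemma mul_card_classOf_add_two_le (hA : 2 ≤ A) (hn : 2 ≤ n) (j : ℕ) :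
    A * #{b : Fin n | classOf n A b = j} + 2 ≤ n + A := by
  have hdm := Nat.div_add_mod n A
  have hr := Nat.mod_lt n (by omega : 0 < A)
  rcases lt_or_ge j A with hj | hj
  · have hle := card_classOf_le_card_mod (n := n) hj
    by_cases hsplit : n % A = 1 ∧ j = 0
    · obtain ⟨hnA, rfl⟩ := hsplit
      have hlt := card_classOf_zero_lt_card_mod (by omega) (by omega) hnA
      have hmod := card_filter_mod_eq_le (n := n) (A := A) (i := 0) (c := n / A + 1)
        (by rw [mul_add_one]; omega)
      have := Nat.mul_le_mul_left A (by omega : #{b : Fin n | classOf n A b = 0} ≤ n / A)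
      omega
    · by_cases hr2 : 2 ≤ n % A
      · have hmod := card_filter_mod_eq_le (n := n) (A := A) (i := j) (c := n / A + 1)
          (by rw [mul_add_one]; omega)
        have := Nat.mul_le_mul_left A (hle.trans hmod)
        rw [mul_add_one] at this
        omega
      · have hmod := card_filter_mod_eq_le (n := n) (A := A) (i := j) (c := n / A) (by omega)
        have := Nat.mul_le_mul_left A (hle.trans hmod)
        omega
  · have := classCount_le_one (by omega) (univ : Finset (Fin n)) hj
    unfold classCount at this
    nlinarith

lemma not_betaBall_classColoring (hA : 2 ≤ A) (hn : 2 ≤ n) (b : Fin n) :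
    ¬ betaBall (1 / (A : ℝ)) (classColoring A (classOf n A b)) univ b := by
  rintro ⟨-, hle⟩
  have hfil : (univ.erase b).filter (fun x => classColoring A (classOf n A b) x =
      classColoring A (classOf n A b) b) =
      ({x | classOf n A x = classOf n A b} : Finset (Fin n)).erase b := by
    ext x
    simp [classColoring, and_comm]
  have hC : 1 ≤ #{x : Fin n | classOf n A x = classOf n A b} := card_pos.2 ⟨b, by simp⟩
  rw [hfil, card_erase_of_mem (by simp), card_univ, Fintype.card_fin, Nat.cast_sub hC,
    div_mul_eq_mul_div, one_mul, div_le_iff₀ (by positivity)] at hle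
  have hsize : (A : ℝ) * #{x : Fin n | classOf n A x = classOf n A b} + 2 ≤ n + A := by
    exact_mod_cast mul_card_classOf_add_two_le hA hn (classOf n A b)
  push_cast at hle
  linarith

end PuncturedResidues

theorem stmt_15_general (α : ℝ) (q n A : ℕ)
    (hq : 2 ≤ q) (hn : q ≤ n)
    (hA : 1 ≤ A ∧ α * ((q : ℝ) - 1) ≤ (⌈(q : ℝ) / (A : ℝ)⌉ : ℝ) - 1)
    (hA2 : 2 ≤ A)
    (hdiv : A ∣ n ∨ A ∣ q ∨ n % A < q % A) :
    ∃ a : Finset (Fin n) → Fin n,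
      (∀ T : Finset (Fin n), T.card = q → a T ∈ T) ∧
      (∃ c : Fin n → Bool, LegalAlpha α q a c) ∧
      ∀ b : Fin n, ∃ c : Fin n → Bool, LegalAlpha α q a c ∧
        ¬ betaBall (1 / (A : ℝ)) c Finset.univ b := by
  have hnq : n % A = 1 → q % A ≠ 1 := by
    rcases hdiv with h | h | h
    · simp [Nat.mod_eq_zero_of_dvd h]
    · simp [Nat.mod_eq_zero_of_dvd h]
    · omega
  have hex : ∀ T : Finset (Fin n), ∃ b, #T = q → IsMajorityAnswer A T b := fun T =>
    if hT : #T = q then (exists_isMajorityAnswer (by omega) (hT ▸ hq)).imp fun _ hb _ => hb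
    else ⟨⟨0, by omega⟩, fun h => absurd h hT⟩
  choose a ha using hex
  have hlegal := legalAlpha_classColoring hA2 hA.2 hnq ha
  exact ⟨a, fun T hT => (ha T hT).1, ⟨_, hlegal 0⟩,
    fun b => ⟨_, hlegal _, not_betaBall_classColoring hA2 (by omega) b⟩⟩

theorem stmt_15 (α : ℝ) (hα0 : 0 < α) (hα : α ≤ 1 / 2) (q n A : ℕ)
    (hq : 2 ≤ q) (hn : q ≤ n)
    (hA : 1 ≤ A ∧ α * ((q : ℝ) - 1) ≤ (⌈(q : ℝ) / (A : ℝ)⌉ : ℝ) - 1)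
    (hAmax : ∀ A' : ℕ, 1 ≤ A' → α * ((q : ℝ) - 1) ≤ (⌈(q : ℝ) / (A' : ℝ)⌉ : ℝ) - 1 → A' ≤ A)
    (hA2 : 2 ≤ A)
    (hdiv : A ∣ n ∨ A ∣ q ∨ n % A < q % A) :
    ∃ a : Finset (Fin n) → Fin n,
      (∀ T : Finset (Fin n), T.card = q → a T ∈ T) ∧
      (∃ c : Fin n → Bool, LegalAlpha α q a c) ∧
      ∀ b : Fin n, ∃ c : Fin n → Bool, LegalAlpha α q a c ∧
        ¬ betaBall (1 / (A : ℝ)) c Finset.univ b :=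
  stmt_15_general α q n A hq hn hA hA2 hdiv
end

section
/- Let 0 < α ≤ 1/2 and q ≥ 2, and let A be the largest positive integer with ⌈q/A⌉ − 1 ≥ α(q−1); assume ⌈q/2⌉ − 1 ≥ α(q−1), so that every q-subset has an α-ball under every coloring. Then there exist a constant c ≥ 0 (depending only on q and α) and n₀ such that for every n ≥ n₀: for every answer function a on all q-element subsets of [n] (each answer a(T)∈T, a(T) an α-ball of T under every legal coloring) that admits at least one legal coloring, there exists a ball b∈[n] such that under every coloring legal for a, at least (n−1)/A − c balls other than b have the same color as b. -/
open Finset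

/-- Kill lemma: if the answer to a `q`-set `T` lies in a color class `C` of a legal
coloring, but the class meets `T` in fewer than `α(q-1)+1` elements, contradiction. -/
private lemma kill_lemma {n q : ℕ} {α : ℝ} {a : Finset (Fin n) → Fin n} {col : Fin n → Bool}
    (hleg : LegalAlpha α q a col) {T : Finset (Fin n)} (hT : T.card = q) (b₀ : Fin n)
    (hcol : col (a T) = col b₀)
    (hcap : (((T ∩ Finset.univ.filter fun x => col x = col b₀).card : ℝ)) < α * ((q : ℝ) - 1) + 1) :
    False := by
  obtain ⟨hmem, hcnt⟩ := hleg T hT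
  set C := Finset.univ.filter fun x => col x = col b₀ with hC
  have haTC : a T ∈ T ∩ C := by
    simp only [hC, mem_inter, mem_filter, mem_univ, true_and]
    exact ⟨hmem, hcol⟩
  have hsub : (T.erase (a T)).filter (fun x => col x = col (a T)) ⊆ (T ∩ C).erase (a T) := by
    intro x hx
    simp only [mem_filter, mem_erase, mem_inter, hC, mem_univ, true_and] at hx ⊢
    exact ⟨hx.1.1, hx.1.2, hx.2.trans hcol⟩
  have h1 : ((T.erase (a T)).filter (fun x => col x = col (a T))).card ≤ (T ∩ C).card - 1 := by
    have := card_le_card hsub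
    rwa [card_erase_of_mem haTC] at this
  have h2 : 1 ≤ (T ∩ C).card := card_pos.2 ⟨_, haTC⟩
  have h3 : ((T.erase (a T)).filter (fun x => col x = col (a T))).card + 1 ≤ (T ∩ C).card := by
    omega
  rw [hT] at hcnt
  have h4 : (((T.erase (a T)).filter (fun x => col x = col (a T))).card : ℝ) + 1
      ≤ ((T ∩ C).card : ℝ) := by exact_mod_cast h3
  linarith

theorem stmt_16 (α : ℝ) (hα0 : 0 < α) (hα : α ≤ 1 / 2) (q A : ℕ) (hq : 2 ≤ q)
    (hA : 1 ≤ A ∧ α * ((q : ℝ) - 1) ≤ (⌈(q : ℝ) / (A : ℝ)⌉ : ℝ) - 1)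
    (hAmax : ∀ A' : ℕ, 1 ≤ A' → α * ((q : ℝ) - 1) ≤ (⌈(q : ℝ) / (A' : ℝ)⌉ : ℝ) - 1 → A' ≤ A)
    (h2 : α * ((q : ℝ) - 1) ≤ (⌈(q : ℝ) / 2⌉ : ℝ) - 1) :
    ∃ c : ℝ, 0 ≤ c ∧ ∃ n₀ : ℕ, ∀ n : ℕ, n₀ ≤ n →
      ∀ a : Finset (Fin n) → Fin n, (∀ T : Finset (Fin n), T.card = q → a T ∈ T) →
        (∃ col : Fin n → Bool, LegalAlpha α q a col) →
        ∃ b : Fin n, ∀ col : Fin n → Bool, LegalAlpha α q a col →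
          ((n : ℝ) - 1) / (A : ℝ) - c ≤
            ((((Finset.univ : Finset (Fin n)).erase b).filter fun x => col x = col b).card : ℝ) := by
  obtain ⟨hA1, _⟩ := hA
  have hq1 : (1:ℝ) ≤ (q:ℝ) - 1 := by
    have : (2:ℝ) ≤ (q:ℝ) := by exact_mod_cast hq
    linarith
  have hαq : 0 < α * ((q:ℝ) - 1) := by nlinarith
  set κ := ⌈α * ((q:ℝ) - 1)⌉₊ with hκdef
  have hκ1 : 1 ≤ κ := Nat.ceil_pos.2 hαq
  have hκub : (κ:ℝ) < α * ((q:ℝ) - 1) + 1 := Nat.ceil_lt_add_one hαq.le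
  have hκlb : α * ((q:ℝ) - 1) ≤ (κ:ℝ) := Nat.le_ceil _
  -- q ≤ (A+1) * κ
  have hceil : ((⌈(q:ℝ) / (((A+1 : ℕ)):ℝ)⌉ : ℤ) : ℝ) - 1 < α * ((q:ℝ) - 1) := by
    by_contra hcon2
    push_neg at hcon2
    have := hAmax (A+1) (by omega) hcon2
    omega
  have hzκ : (⌈(q:ℝ) / (((A+1 : ℕ)):ℝ)⌉ : ℤ) ≤ (κ : ℤ) := by
    have h1 : ((⌈(q:ℝ) / (((A+1 : ℕ)):ℝ)⌉ : ℤ) : ℝ) < (κ:ℝ) + 1 := by linarith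
    have h2' : (⌈(q:ℝ) / (((A+1 : ℕ)):ℝ)⌉ : ℤ) < (κ:ℤ) + 1 := by exact_mod_cast h1
    omega
  have hqκ : q ≤ (A+1) * κ := by
    have hpos : (0:ℝ) < (((A+1 : ℕ)):ℝ) := by
      have : 0 < A + 1 := by omega
      exact_mod_cast this
    have hle : (q:ℝ) / (((A+1 : ℕ)):ℝ) ≤ ((⌈(q:ℝ) / (((A+1 : ℕ)):ℝ)⌉ : ℤ) : ℝ) := Int.le_ceil _
    have h3 : ((⌈(q:ℝ) / (((A+1 : ℕ)):ℝ)⌉ : ℤ) : ℝ) ≤ (κ:ℝ) := by exact_mod_cast hzκ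
    rw [div_le_iff₀ hpos] at hle
    have h4 : (q:ℝ) ≤ (((A+1 : ℕ)):ℝ) * (κ:ℝ) := by nlinarith
    exact_mod_cast h4
  refine ⟨(q:ℝ) + 1, by positivity, 1, ?_⟩
  intro n hn a ha _hex
  by_contra hcon
  push_neg at hcon
  choose colf hlegf hsmallf using hcon
  set S : Fin n → Finset (Fin n) :=
    fun b => Finset.univ.filter (fun x => colf b x = colf b b) with hSdef
  have hmemS : ∀ b x, x ∈ S b ↔ colf b x = colf b b := by
    intro b x; simp [hSdef]
  have hbS : ∀ b, b ∈ S b := by intro b; simp [hSdef]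
  set B : ℝ := ((n:ℝ) - 1)/(A:ℝ) - (q:ℝ) with hBdef
  have hScard : ∀ b, ((S b).card : ℝ) ≤ B := by
    intro b
    have heq : S b = insert b ((Finset.univ.erase b).filter (fun x => colf b x = colf b b)) := by
      ext x
      by_cases hx : x = b <;> simp [hSdef, hx]
    have hcard : (S b).card
        = ((Finset.univ.erase b).filter (fun x => colf b x = colf b b)).card + 1 := by
      rw [heq, card_insert_of_notMem (by simp)]
    have hs := hsmallf b
    rw [hcard]
    push_cast
    rw [hBdef]
    linarith
  have hA1R : (1:ℝ) ≤ (A:ℝ) := by exact_mod_cast hA1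
  haveI : Nonempty (Fin n) := ⟨⟨0, hn⟩⟩
  obtain ⟨v, hv⟩ :=
    Finite.exists_max (fun w : Fin A → Fin n => (Finset.univ.biUnion fun i => S (w i)).card)
  set U := Finset.univ.biUnion (fun i => S (v i)) with hUdef
  have hUB : (U.card : ℝ) ≤ (n:ℝ) - 1 - (A:ℝ)*(q:ℝ) := by
    have h1 : U.card ≤ ∑ i, (S (v i)).card := card_biUnion_le
    have h2' : ((∑ i, (S (v i)).card : ℕ) : ℝ) ≤ (A:ℝ) * B := by
      push_cast
      calc ∑ i, ((S (v i)).card : ℝ) ≤ ∑ _i : Fin A, B := by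
            exact Finset.sum_le_sum (fun i _ => hScard _)
        _ = (A:ℝ) * B := by
            simp [Finset.sum_const, Fintype.card_fin, nsmul_eq_mul]
    have h3 : (U.card : ℝ) ≤ (A:ℝ) * B := le_trans (by exact_mod_cast h1) h2'
    have hAne : (A:ℝ) ≠ 0 := by positivity
    have hexp : (A:ℝ) * B = (n:ℝ) - 1 - (A:ℝ)*(q:ℝ) := by
      rw [hBdef]; field_simp
    linarith
  have hUq : U.card + q + 1 ≤ n := by
    have hq0 : (0:ℝ) ≤ (q:ℝ) := by positivity
    have hAq : (q:ℝ) ≤ (A:ℝ)*(q:ℝ) := by nlinarith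
    have : ((U.card + q + 1 : ℕ) : ℝ) ≤ (n:ℝ) := by push_cast; linarith
    exact_mod_cast this
  have hcompl : q + 1 ≤ (Finset.univ \ U).card := by
    rw [card_sdiff_of_subset (subset_univ U), card_univ, Fintype.card_fin]
    omega
  by_cases hheavy : ∃ y, y ∉ U ∧ κ ≤ (S y \ U).card
  · -- heavy case
    obtain ⟨y₀, hy₀U, hy₀⟩ := hheavy
    set Ui : Fin A → Finset (Fin n) :=
      fun i => (Finset.univ.erase i).biUnion (fun j => S (v j)) with hUidef
    have hSUi : ∀ i j : Fin A, j ≠ i → S (v j) ⊆ Ui i := by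
      intro i j hj
      exact subset_biUnion_of_mem (fun j => S (v j)) (by simp [hj])
    have hsplit : ∀ (z : Fin n) (i : Fin A),
        Finset.univ.biUnion (fun j => S (Function.update v i z j)) = S z ∪ Ui i := by
      intro z i
      ext x
      simp only [mem_biUnion, mem_union, mem_univ, true_and, hUidef, mem_erase]
      constructor
      · rintro ⟨j, hj⟩
        by_cases hji : j = i
        · left; rwa [hji, Function.update_self] at hj
        · right; exact ⟨j, ⟨hji, trivial⟩, by rwa [Function.update_of_ne hji] at hj⟩
      · rintro (hx | ⟨j, ⟨hji, _⟩, hj⟩)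
        · exact ⟨i, by rwa [Function.update_self]⟩
        · exact ⟨j, by rwa [Function.update_of_ne hji]⟩
    have hexcl : ∀ i : Fin A, κ ≤ ((S (v i) \ Ui i) \ S y₀).card := by
      intro i
      have hU' : U = S (v i) ∪ Ui i := by
        have := hsplit (v i) i
        rwa [Function.update_eq_self] at this
      have hmax : (Finset.univ.biUnion fun j => S (Function.update v i y₀ j)).card ≤ U.card :=
        hv _
      rw [hsplit y₀ i, hU'] at hmax
      have e1 : (S y₀ \ Ui i).card + (Ui i).card = (S y₀ ∪ Ui i).card := card_sdiff_add_card _ _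
      have e2 : (S (v i) \ Ui i).card + (Ui i).card = (S (v i) ∪ Ui i).card :=
        card_sdiff_add_card _ _
      have h1 : (S y₀ \ Ui i).card ≤ (S (v i) \ Ui i).card := by omega
      set X := S (v i) \ Ui i with hX
      have hsub2 : (S y₀ \ U) ∪ (S y₀ ∩ X) ⊆ S y₀ \ Ui i := by
        intro x hx
        rcases mem_union.1 hx with h | h
        · obtain ⟨hx1, hx2⟩ := mem_sdiff.1 h
          exact mem_sdiff.2 ⟨hx1, fun hxUi => hx2 (hU' ▸ mem_union_right _ hxUi)⟩
        · obtain ⟨hx1, hx2⟩ := mem_inter.1 h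
          exact mem_sdiff.2 ⟨hx1, (mem_sdiff.1 hx2).2⟩
      have hdisj : Disjoint (S y₀ \ U) (S y₀ ∩ X) := by
        rw [disjoint_left]
        intro x hx hx2
        have hxX : x ∈ X := (mem_inter.1 hx2).2
        have hxU : x ∈ U := hU' ▸ mem_union_left _ (mem_sdiff.1 hxX).1
        exact (mem_sdiff.1 hx).2 hxU
      have h2' : (S y₀ \ U).card + (S y₀ ∩ X).card ≤ (S y₀ \ Ui i).card := by
        rw [← card_union_of_disjoint hdisj]
        exact card_le_card hsub2
      have h3 : (X ∩ S y₀).card + (X \ S y₀).card = X.card := card_inter_add_card_sdiff X (S y₀)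
      have h4 : (S y₀ ∩ X).card = (X ∩ S y₀).card := by rw [inter_comm]
      omega
    choose P hPsub hPcard using fun i => Finset.exists_subset_card_eq (hexcl i)
    obtain ⟨P₀, hP₀sub, hP₀card⟩ := Finset.exists_subset_card_eq hy₀
    have hPS : ∀ i, P i ⊆ S (v i) := fun i =>
      (hPsub i).trans ((sdiff_subset).trans sdiff_subset)
    have hPnotUi : ∀ i, ∀ x ∈ P i, x ∉ Ui i := by
      intro i x hx
      exact (mem_sdiff.1 (sdiff_subset (hPsub i hx))).2
    have hPnotY : ∀ i, ∀ x ∈ P i, x ∉ S y₀ := by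
      intro i x hx
      exact (mem_sdiff.1 (hPsub i hx)).2
    have hP₀S : P₀ ⊆ S y₀ := hP₀sub.trans sdiff_subset
    have hP₀notU : ∀ x ∈ P₀, x ∉ U := fun x hx => (mem_sdiff.1 (hP₀sub hx)).2
    have hSU : ∀ i : Fin A, S (v i) ⊆ U := fun i =>
      subset_biUnion_of_mem (fun j => S (v j)) (mem_univ i)
    have hPdisj : ∀ i ∈ (Finset.univ : Finset (Fin A)), ∀ j ∈ (Finset.univ : Finset (Fin A)),
        i ≠ j → Disjoint (P i) (P j) := by
      intro i _ j _ hij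
      rw [disjoint_left]
      intro x hx hx2
      exact hPnotUi i x hx (hSUi i j (Ne.symm hij) (hPS j hx2))
    have hbi : (Finset.univ.biUnion P).card = A * κ := by
      rw [card_biUnion hPdisj]
      simp [hPcard, Finset.sum_const, Fintype.card_fin]
    have hP₀bdisj : Disjoint P₀ (Finset.univ.biUnion P) := by
      rw [disjoint_left]
      intro x hx hx2
      obtain ⟨i, _, hi⟩ := mem_biUnion.1 hx2
      exact hP₀notU x hx (hSU i (hPS i hi))
    set W := P₀ ∪ Finset.univ.biUnion P with hW
    have hqW : q ≤ W.card := by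
      rw [hW, card_union_of_disjoint hP₀bdisj, hP₀card, hbi]
      have : (A+1) * κ = κ + A * κ := by ring
      omega
    obtain ⟨T, hTsub, hTcard⟩ := Finset.exists_subset_card_eq hqW
    have haT : a T ∈ T := ha T hTcard
    have haTW : a T ∈ W := hTsub haT
    rcases mem_union.1 haTW with hc | hc
    · -- a T ∈ P₀
      have hcol : colf y₀ (a T) = colf y₀ y₀ := (hmemS y₀ (a T)).1 (hP₀S hc)
      apply kill_lemma (hlegf y₀) hTcard y₀ hcol
      have hsubP : T ∩ (Finset.univ.filter fun x => colf y₀ x = colf y₀ y₀) ⊆ P₀ := by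
        intro x hx
        obtain ⟨hxT, hxC⟩ := mem_inter.1 hx
        have hxS : x ∈ S y₀ := by rw [hSdef]; exact hxC
        rcases mem_union.1 (hTsub hxT) with h | h
        · exact h
        · obtain ⟨i, _, hi⟩ := mem_biUnion.1 h
          exact absurd hxS (hPnotY i x hi)
      have : (T ∩ (Finset.univ.filter fun x => colf y₀ x = colf y₀ y₀)).card ≤ κ :=
        (card_le_card hsubP).trans_eq hP₀card
      have hcast : ((T ∩ (Finset.univ.filter fun x => colf y₀ x = colf y₀ y₀)).card : ℝ) ≤ (κ:ℝ) := by
        exact_mod_cast this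
      linarith
    · -- a T ∈ P i
      obtain ⟨i, _, hi⟩ := mem_biUnion.1 hc
      have hcol : colf (v i) (a T) = colf (v i) (v i) := (hmemS (v i) (a T)).1 (hPS i hi)
      apply kill_lemma (hlegf (v i)) hTcard (v i) hcol
      have hsubP : T ∩ (Finset.univ.filter fun x => colf (v i) x = colf (v i) (v i)) ⊆ P i := by
        intro x hx
        obtain ⟨hxT, hxC⟩ := mem_inter.1 hx
        have hxS : x ∈ S (v i) := by rw [hSdef]; exact hxC
        rcases mem_union.1 (hTsub hxT) with h | h
        · exact absurd (hSU i hxS) (hP₀notU x h)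
        · obtain ⟨j, _, hj⟩ := mem_biUnion.1 h
          rcases eq_or_ne j i with hji | hji
          · exact hji ▸ hj
          · exact absurd (hSUi j i hji.symm hxS) (hPnotUi j x hj)
      have : (T ∩ (Finset.univ.filter fun x => colf (v i) x = colf (v i) (v i))).card ≤ κ :=
        (card_le_card hsubP).trans_eq (hPcard i)
      have hcast : ((T ∩ (Finset.univ.filter fun x => colf (v i) x = colf (v i) (v i))).card : ℝ)
          ≤ (κ:ℝ) := by exact_mod_cast this
      linarith
  · -- light case
    push_neg at hheavy
    obtain ⟨T, hTsub, hTcard⟩ := Finset.exists_subset_card_eq (show q ≤ (Finset.univ \ U).card by omega)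
    have haT : a T ∈ T := ha T hTcard
    have haTU : a T ∉ U := (mem_sdiff.1 (hTsub haT)).2
    apply kill_lemma (hlegf (a T)) hTcard (a T) rfl
    have hsub : T ∩ (Finset.univ.filter fun x => colf (a T) x = colf (a T) (a T)) ⊆ S (a T) \ U := by
      intro x hx
      obtain ⟨hxT, hxC⟩ := mem_inter.1 hx
      have hxS : x ∈ S (a T) := by rw [hSdef]; exact hxC
      exact mem_sdiff.2 ⟨hxS, (mem_sdiff.1 (hTsub hxT)).2⟩
    have h5 : (T ∩ (Finset.univ.filter fun x => colf (a T) x = colf (a T) (a T))).card < κ :=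
      lt_of_le_of_lt (card_le_card hsub) (hheavy _ haTU)
    have hcast : ((T ∩ (Finset.univ.filter fun x => colf (a T) x = colf (a T) (a T))).card : ℝ)
        < (κ:ℝ) := by exact_mod_cast h5
    linarith
end

section
/- Let A₁, A₂, A₃ be subsets of an n-element set such that 2|Aᵢ| < n for i = 1,2,3. Then there exist indices i ≠ j with 6|Aᵢ ∪ Aⱼ| < 5n. -/
theorem stmt_17 (n : ℕ) (A : Fin 3 → Finset (Fin n)) (h : ∀ i, 2 * (A i).card < n) :
    ∃ i j : Fin 3, i ≠ j ∧ 6 * (A i ∪ A j).card < 5 * n := by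
  have h0 := h 0
  have h1 := h 1
  have h2 := h 2
  have e12 := Finset.card_union_add_card_inter (A 0) (A 1)
  have e13 := Finset.card_union_add_card_inter (A 0) (A 2)
  have e23 := Finset.card_union_add_card_inter (A 1) (A 2)
  have e3 := Finset.card_union_add_card_inter (A 0 ∪ A 1) (A 2)
  have hsub : ((A 0 ∪ A 1) ∩ A 2).card ≤ (A 0 ∩ A 2).card + (A 1 ∩ A 2).card := by
    calc ((A 0 ∪ A 1) ∩ A 2).card ≤ ((A 0 ∩ A 2) ∪ (A 1 ∩ A 2)).card := by
          apply Finset.card_le_card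
          rw [Finset.union_inter_distrib_right]
      _ ≤ (A 0 ∩ A 2).card + (A 1 ∩ A 2).card := Finset.card_union_le _ _
  have hn : (A 0 ∪ A 1 ∪ A 2).card ≤ n := by
    simpa using Finset.card_le_card (Finset.subset_univ (A 0 ∪ A 1 ∪ A 2))
  -- key inequality: sum of cards ≤ n + sum of pairwise intersections
  have key : (A 0).card + (A 1).card + (A 2).card ≤
      n + ((A 0 ∩ A 1).card + (A 0 ∩ A 2).card + (A 1 ∩ A 2).card) := by omega
  by_cases c12 : 6 * (A 0 ∪ A 1).card < 5 * n
  · exact ⟨0, 1, by decide, c12⟩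
  by_cases c13 : 6 * (A 0 ∪ A 2).card < 5 * n
  · exact ⟨0, 2, by decide, c13⟩
  refine ⟨1, 2, by decide, ?_⟩
  omega
end

section
/- Let n ≥ 4 be even and let X ⊆ [n] with |X| = n/2. There exists an answer function a assigning to each 3-element subset T of [n] a ball a(T)∈T, such that both of the following colorings are legal for a (i.e., every answer is a majority ball of its query under each): (1) the constant coloring in which all balls are red, and (2) the coloring in which exactly the balls of X are red and the rest are blue. Consequently, since under coloring (1) every ball is a majority ball of [n] while under coloring (2) no ball is a majority ball of [n], even asking all 3-element queries cannot determine whether a majority ball of [n] exists. -/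
theorem stmt_18 (n : ℕ) (heven : Even n) (hn : 4 ≤ n) (X : Finset (Fin n))
    (hX : 2 * X.card = n) :
    ∃ a : Finset (Fin n) → Fin n,
      (∀ T : Finset (Fin n), T.card = 3 → a T ∈ T) ∧
      (∀ T : Finset (Fin n), T.card = 3 → majBall (fun _ => true) T (a T)) ∧
      (∀ T : Finset (Fin n), T.card = 3 → majBall (fun x => decide (x ∈ X)) T (a T)) ∧
      (∀ b : Fin n, majBall (fun _ => true) Finset.univ b) ∧
      (∀ b : Fin n, ¬ majBall (fun x => decide (x ∈ X)) Finset.univ b) := by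
  have hn0 : 0 < n := by omega
  classical
  -- key: for any T of card 3, there is a good ball
  have key : ∀ T : Finset (Fin n), T.card = 3 →
      ∃ b ∈ T, T.card < 2 * (T.filter fun x => decide (x ∈ X) = decide (b ∈ X)).card := by
    intro T hT
    have hsplit : (T.filter fun x => x ∈ X).card + (T.filter fun x => x ∉ X).card = 3 := by
      rw [Finset.card_filter_add_card_filter_not]; exact hT
    by_cases h2 : 2 ≤ (T.filter fun x => x ∈ X).card
    · obtain ⟨b, hb⟩ := Finset.card_pos.mp (by omega : 0 < (T.filter fun x => x ∈ X).card)
      have hbT := Finset.mem_filter.mp hb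
      refine ⟨b, hbT.1, ?_⟩
      have : (T.filter fun x => decide (x ∈ X) = decide (b ∈ X)) = T.filter fun x => x ∈ X := by
        apply Finset.filter_congr
        intro x _
        simp [hbT.2]
      rw [this, hT]; omega
    · have h2' : 2 ≤ (T.filter fun x => x ∉ X).card := by omega
      obtain ⟨b, hb⟩ := Finset.card_pos.mp (by omega : 0 < (T.filter fun x => x ∉ X).card)
      have hbT := Finset.mem_filter.mp hb
      refine ⟨b, hbT.1, ?_⟩
      have : (T.filter fun x => decide (x ∈ X) = decide (b ∈ X)) = T.filter fun x => x ∉ X := by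
        apply Finset.filter_congr
        intro x _
        simp [hbT.2]
      rw [this, hT]; omega
  refine ⟨fun T => if h : ∃ b ∈ T, T.card < 2 * (T.filter fun x => decide (x ∈ X) = decide (b ∈ X)).card then h.choose else ⟨0, hn0⟩, ?_, ?_, ?_, ?_, ?_⟩
  · intro T hT
    have h := key T hT
    simp only [dif_pos h]
    exact h.choose_spec.1
  · intro T hT
    have h := key T hT
    simp only [dif_pos h]
    refine ⟨h.choose_spec.1, ?_⟩
    have : (T.filter fun x => (fun _ : Fin n => true) x = true) = T := by simp
    rw [this, hT]; omega
  · intro T hT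
    have h := key T hT
    simp only [dif_pos h]
    exact ⟨h.choose_spec.1, h.choose_spec.2⟩
  · intro b
    refine ⟨Finset.mem_univ b, ?_⟩
    have : (Finset.univ.filter fun x : Fin n => (fun _ : Fin n => true) x = true) = Finset.univ := by simp
    rw [this, Finset.card_univ, Fintype.card_fin]; omega
  · intro b
    rintro ⟨-, hlt⟩
    have hcard : (Finset.univ.filter fun x : Fin n => decide (x ∈ X) = decide (b ∈ X)).card = X.card := by
      by_cases hb : b ∈ X
      · have : (Finset.univ.filter fun x : Fin n => decide (x ∈ X) = decide (b ∈ X)) = X := by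
          ext x; simp [hb]
        rw [this]
      · have : (Finset.univ.filter fun x : Fin n => decide (x ∈ X) = decide (b ∈ X)) = Xᶜ := by
          ext x; simp [hb]
        rw [this, Finset.card_compl, Fintype.card_fin]; omega
    rw [hcard] at hlt
    rw [Finset.card_univ, Fintype.card_fin] at hlt
    omega
end
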